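/- If (X, v) is admissible for an ADF (S, L, C), then its update under the ultimate approximation operator is again admissible: admissible S L C (ΓX S L C X v) (Γv S L C X v). -/
import Mathlib


variable {α : Type*}

def Subs (A B : α → Prop) : Prop := ∀ x, A x → B x

def V2 (S w : α → Prop) : Prop := Subs w S

def V3 (S X v : α → Prop) : Prop := Subs X S ∧ Subs v X

def inter (A B : α → Prop) : α → Prop := fun x => A x ∧ B x

def parent (S : α → Prop) (L : α → α → Prop) (a : α) : α → Prop :=
  fun b => L b a ∧ S b

def restrictedC (S : α → Prop) (L : α → α → Prop)
    (C : α → (α → Prop) → Prop) (s : α) (X : α → Prop) : Prop :=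
  ∃ A, C s A ∧ inter A (parent S L s) = X

def G (S : α → Prop) (L : α → α → Prop) (C : α → (α → Prop) → Prop)
    (w : α → Prop) : α → Prop :=
  fun s => S s ∧ restrictedC S L C s (inter w (parent S L s))

def leqi (X1 v1 X2 v2 : α → Prop) : Prop :=
  Subs X1 X2 ∧ ∀ s, X1 s → (v2 s ↔ v1 s)

def approxTwoVal (X v S w : α → Prop) : Prop :=
  V2 S w ∧ leqi X v S w

def GammaX (S : α → Prop) (L : α → α → Prop) (C : α → (α → Prop) → Prop)
    (X v : α → Prop) : α → Prop :=
  fun s => S s ∧ ∀ w1 w2, approxTwoVal X v S w1 → approxTwoVal X v S w2 →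
    (G S L C w1 s ↔ G S L C w2 s)

def Gammav (S : α → Prop) (L : α → α → Prop) (C : α → (α → Prop) → Prop)
    (X v : α → Prop) : α → Prop :=
  fun s => S s ∧ ∀ w, approxTwoVal X v S w → G S L C w s

def model (S : α → Prop) (L : α → α → Prop) (C : α → (α → Prop) → Prop)
    (w : α → Prop) : Prop :=
  V2 S w ∧ G S L C w = w

def admissible (S : α → Prop) (L : α → α → Prop) (C : α → (α → Prop) → Prop)
    (X v : α → Prop) : Prop :=
  V3 S X v ∧ leqi X v (GammaX S L C X v) (Gammav S L C X v)

def complete (S : α → Prop) (L : α → α → Prop) (C : α → (α → Prop) → Prop)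
    (X v : α → Prop) : Prop :=
  V3 S X v ∧ GammaX S L C X v = X ∧ Gammav S L C X v = v

def preferred (S : α → Prop) (L : α → α → Prop) (C : α → (α → Prop) → Prop)
    (X v : α → Prop) : Prop :=
  admissible S L C X v ∧
    ∀ X' v', admissible S L C X' v' ∧ leqi X v X' v' → X' = X ∧ v' = v

def grounded (S : α → Prop) (L : α → α → Prop) (C : α → (α → Prop) → Prop)
    (X v : α → Prop) : Prop :=
  complete S L C X v ∧ ∀ X' v', complete S L C X' v' → leqi X v X' v'

def reductL (L : α → α → Prop) (w : α → Prop) : α → α → Prop :=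
  fun s1 s2 => L s1 s2 ∧ w s1 ∧ w s2

def reductC (C : α → (α → Prop) → Prop) (w : α → Prop) :
    α → (α → Prop) → Prop :=
  fun s X => w s ∧ C s X ∧ ∀ s', ¬ w s' → ¬ X s'

def stable (S : α → Prop) (L : α → α → Prop) (C : α → (α → Prop) → Prop)
    (w : α → Prop) : Prop :=
  model S L C w ∧ grounded w (reductL L w) (reductC C w) w w

lemma approx_mono {X v X' v' S w : α → Prop} (h : leqi X v X' v')
    (hw : approxTwoVal X' v' S w) : approxTwoVal X v S w := by
  obtain ⟨hV, hsub, hagree⟩ := hw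
  exact ⟨hV, fun x hx => hsub x (h.1 x hx),
    fun s hs => (hagree s (h.1 s hs)).trans (h.2 s hs)⟩

theorem preferred_to_complete_1 (S : α → Prop) (L : α → α → Prop)
    (C : α → (α → Prop) → Prop) (X v : α → Prop)
    (h : admissible S L C X v) :
    admissible S L C (GammaX S L C X v) (Gammav S L C X v) := by
  obtain ⟨hV3, hle⟩ := h
  refine ⟨⟨fun s hs => hs.1, fun s hs =>
      ⟨hs.1, fun w1 w2 h1 h2 => iff_of_true (hs.2 w1 h1) (hs.2 w2 h2)⟩⟩,
    fun s hs => ⟨hs.1, fun w1 w2 h1 h2 =>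
      hs.2 w1 w2 (approx_mono hle h1) (approx_mono hle h2)⟩,
    fun s hs => ?_⟩
  constructor
  · intro hg
    refine ⟨hs.1, fun w hw => ?_⟩
    have hw0 : approxTwoVal (GammaX S L C X v) (Gammav S L C X v) S
        (inter (GammaX S L C X v) (Gammav S L C X v)) := by
      refine ⟨fun x hx => hx.1.1, fun x hx => hx.1, fun x hx => ?_⟩
      exact ⟨fun h' => h'.2, fun h' => ⟨hx, h'⟩⟩
    have hG := hg.2 _ hw0
    exact (hs.2 w _ hw (approx_mono hle hw0)).mpr hG
  · intro hg
    exact ⟨hg.1, fun w hw => hg.2 w (approx_mono hle hw)⟩
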